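/- For every N ∈ ℕ, N ≥ 1, the series Σ_{n ≥ N+1} ((q−n)²+1)^{−1} and Σ_{n ≥ N+1} ((q+n)²+1)^{−1} converge uniformly on the open ball B(0,N) = {q ∈ ℍ : |q| < N} (all terms being defined there, since the quaternions (q∓n)²+1 do not vanish for |q| < N and n ≥ N+1), and their sums are slice regular functions on B(0,N). -/

import Mathlib

open Quaternion Filter Topology

noncomputable section

/-- The 2-sphere `𝕊 = {q ∈ ℍ : q² = -1}` of quaternionic imaginary units. -/
def QS : Set ℍ[ℝ] := {q | q ^ 2 = -1}

/-- The slice function `g_I(x,y) = f(x + yI)`. -/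
def sliceFun (f : ℍ[ℝ] → ℍ[ℝ]) (I : ℍ[ℝ]) (p : ℝ × ℝ) : ℍ[ℝ] :=
  f ((p.1 : ℍ[ℝ]) + p.2 • I)

/-- `f` is slice regular on `Ω`: for each imaginary unit `I`, the slice function
`g_I(x,y) = f(x+yI)` is real differentiable and satisfies `∂g/∂x + I ∂g/∂y = 0`
at every point `(x,y)` with `x + yI ∈ Ω`. -/
def SliceRegularOn (f : ℍ[ℝ] → ℍ[ℝ]) (Ω : Set ℍ[ℝ]) : Prop :=
  ∀ I ∈ QS, ∀ p : ℝ × ℝ, ((p.1 : ℍ[ℝ]) + p.2 • I) ∈ Ω →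
    DifferentiableAt ℝ (sliceFun f I) p ∧
    fderiv ℝ (sliceFun f I) p (1, 0) + I * fderiv ℝ (sliceFun f I) p (0, 1) = 0

/-- The 2-sphere `x + y𝕊 = {x + yJ : J ∈ 𝕊}` (a real point when `y = 0`). -/
def qSphere (x y : ℝ) : Set ℍ[ℝ] := {q | ∃ I ∈ QS, q = (x : ℍ[ℝ]) + y • I}

/-- The symmetric open set `U(x₀+y₀𝕊, R) = {q : |(q-x₀)² + y₀²| < R²}`. -/
def sphU (x0 y0 R : ℝ) : Set ℍ[ℝ] :=
  {q | ‖(q - (x0 : ℍ[ℝ])) ^ 2 + ((y0 : ℍ[ℝ])) ^ 2‖ < R ^ 2}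

/-- `Ω` is axially symmetric. -/
def AxSymm (Ω : Set ℍ[ℝ]) : Prop :=
  ∀ x y : ℝ, ∀ I ∈ QS, ((x : ℍ[ℝ]) + y • I) ∈ Ω → qSphere x y ⊆ Ω

/-- `Ω` is a symmetric slice domain: an axially symmetric, open, connected set that
meets the real axis and whose intersection with each slice `L_I = ℝ + ℝI` is connected. -/
def SymmSliceDomain (Ω : Set ℍ[ℝ]) : Prop :=
  IsOpen Ω ∧ IsConnected Ω ∧ AxSymm Ω ∧ (∃ r : ℝ, (r : ℍ[ℝ]) ∈ Ω) ∧
    ∀ I ∈ QS, IsConnected {q ∈ Ω | ∃ a b : ℝ, q = (a : ℍ[ℝ]) + b • I}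

/-!
Every quaternion `w` satisfies `‖w ^ 2 + 1‖ ≥ (re w) ^ 2`. For `‖q‖ < N` and a real `c` with
`|c| ≥ N + k + 1` this bounds `((q - c) ^ 2 + 1)⁻¹` by `1 / (k + 1) ^ 2`, so the Weierstrass
M-test gives uniform convergence on the ball.

Since the coefficients are real, every embedding `φ : ℂ → ℍ` of `ℂ` onto a slice `L_I`
carries the complex series `∑ ((z - c) ^ 2 + 1)⁻¹` termwise onto the quaternionic one. The
complex series is holomorphic on the disc, being a uniform limit of holomorphic functions,
and composing with `φ` turns its Cauchy–Riemann equation into `∂ₓg + I ∂ᵧg = 0`.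
-/

namespace Quaternion

theorem abs_re_le_norm (q : ℍ[ℝ]) : |q.re| ≤ ‖q‖ := by
  refine abs_le_of_sq_le_sq ?_ (norm_nonneg q)
  have h := normSq_eq_norm_mul_self q
  rw [normSq_def'] at h
  nlinarith [sq_nonneg q.imI, sq_nonneg q.imJ, sq_nonneg q.imK]

theorem sq_re_le_norm_sq_add_one (w : ℍ[ℝ]) : w.re ^ 2 ≤ ‖w ^ 2 + 1‖ := by
  have key : normSq (w ^ 2 + 1) = w.re ^ 4 + (w.imI ^ 2 + w.imJ ^ 2 + w.imK ^ 2 - 1) ^ 2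
      + 2 * w.re ^ 2 * (w.imI ^ 2 + w.imJ ^ 2 + w.imK ^ 2 + 1) := by
    rw [normSq_def', sq w]
    simp only [re_add, imI_add, imJ_add, imK_add, re_mul, imI_mul, imJ_mul, imK_mul,
      re_one, imI_one, imJ_one, imK_one]
    ring
  have hle : (w.re ^ 2) ^ 2 ≤ ‖w ^ 2 + 1‖ ^ 2 := by
    rw [sq ‖_‖, ← normSq_eq_norm_mul_self, key]
    nlinarith [sq_nonneg (w.imI ^ 2 + w.imJ ^ 2 + w.imK ^ 2 - 1), sq_nonneg w.re,
      sq_nonneg w.imI, sq_nonneg w.imJ, sq_nonneg w.imK]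
  exact (pow_le_pow_iff_left₀ (sq_nonneg _) (norm_nonneg _) two_ne_zero).mp hle

variable {q : ℍ[ℝ]} {c R s : ℝ}

theorem sq_le_norm_sq_sub_add_one (hq : ‖q‖ ≤ R) (hs : 0 ≤ s) (hc : R + s ≤ |c|) :
    s ^ 2 ≤ ‖(q - c) ^ 2 + 1‖ := by
  have hre : s ≤ |(q - c).re| := by
    rw [re_sub, re_coe, abs_sub_comm]
    linarith [abs_sub_abs_le_abs_sub c q.re, abs_re_le_norm q]
  calc s ^ 2 ≤ |(q - c).re| ^ 2 := pow_le_pow_left₀ hs hre 2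
    _ = (q - c).re ^ 2 := sq_abs _
    _ ≤ ‖(q - c) ^ 2 + 1‖ := sq_re_le_norm_sq_add_one _

theorem sq_sub_add_one_ne_zero (hq : ‖q‖ < |c|) : (q - c) ^ 2 + 1 ≠ 0 := by
  have h := sq_le_norm_sq_sub_add_one le_rfl (sub_pos.mpr hq).le (add_sub_cancel _ _).le
  exact norm_pos_iff.mp ((pow_pos (sub_pos.mpr hq) 2).trans_le h)

theorem norm_inv_sq_sub_add_one_le (hq : ‖q‖ ≤ R) (hs : 0 < s) (hc : R + s ≤ |c|) :
    ‖((q - c) ^ 2 + 1)⁻¹‖ ≤ (s ^ 2)⁻¹ := by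
  rw [norm_inv]
  exact inv_anti₀ (pow_pos hs 2) (sq_le_norm_sq_sub_add_one hq hs.le hc)

theorem re_eq_zero_of_sq_eq_neg_one {J : ℍ[ℝ]} (hJ : J ^ 2 = -1) : J.re = 0 := by
  have hnorm : normSq J = 1 := by
    have h : normSq J ^ 2 = 1 := by rw [← map_pow, hJ, normSq_neg, map_one]
    nlinarith [normSq_nonneg (a := J)]
  exact sq_eq_neg_normSq.mp (by rw [hJ, hnorm, coe_one])

theorem sq_map_complex_I (φ : ℂ →ₐ[ℝ] ℍ[ℝ]) : φ Complex.I ^ 2 = -1 := by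
  rw [← map_pow, Complex.I_sq, map_neg, map_one]

theorem star_map_complex (φ : ℂ →ₐ[ℝ] ℍ[ℝ]) (z : ℂ) :
    star (φ z) = φ ((starRingEnd ℂ) z) := by
  have hJ : star (φ Complex.I) = -φ Complex.I :=
    star_eq_neg.mpr (re_eq_zero_of_sq_eq_neg_one (sq_map_complex_I φ))
  rw [← Complex.re_add_im z]
  simp only [map_add, map_mul, star_add, Complex.conj_ofReal, Complex.conj_I, mul_neg, map_neg,
    AlgHom.map_coe_real_complex, algebraMap_def, star_coe, coe_mul_eq_smul, star_smul, hJ, smul_neg]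

theorem norm_map_complex (φ : ℂ →ₐ[ℝ] ℍ[ℝ]) (z : ℂ) : ‖φ z‖ = ‖z‖ := by
  have h : normSq (φ z) = Complex.normSq z := by
    apply coe_injective
    rw [← self_mul_star, star_map_complex, ← map_mul, Complex.mul_conj,
      AlgHom.map_coe_real_complex, algebraMap_def]
  rw [← sq_eq_sq₀ (norm_nonneg _) (norm_nonneg _), sq, sq, ← normSq_eq_norm_mul_self, h,
    Complex.normSq_eq_norm_sq, sq]

theorem map_complex_sq_sub_add_one (φ : ℂ →ₐ[ℝ] ℍ[ℝ]) (z : ℂ) (c : ℝ) :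
    φ ((z - c) ^ 2 + 1) = (φ z - c) ^ 2 + 1 := by
  simp [AlgHom.map_coe_real_complex, algebraMap_def]

end Quaternion

namespace Complex

variable {z : ℂ} {c R s : ℝ}

theorem sq_sub_add_one_ne_zero (hz : ‖z‖ < |c|) : (z - c) ^ 2 + 1 ≠ 0 := fun h =>
  Quaternion.sq_sub_add_one_ne_zero (q := Quaternion.ofComplex z)
    (by rwa [Quaternion.norm_map_complex])
    (by rw [← Quaternion.map_complex_sq_sub_add_one, h, map_zero])

theorem norm_inv_sq_sub_add_one_le (hz : ‖z‖ ≤ R) (hs : 0 < s) (hc : R + s ≤ |c|) :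
    ‖((z - c) ^ 2 + 1)⁻¹‖ ≤ (s ^ 2)⁻¹ := by
  rw [← Quaternion.norm_map_complex Quaternion.ofComplex, map_inv₀,
    Quaternion.map_complex_sq_sub_add_one]
  exact Quaternion.norm_inv_sq_sub_add_one_le (by rwa [Quaternion.norm_map_complex]) hs hc

end Complex

def sliceEmbedding {I : ℍ[ℝ]} (hI : I ∈ QS) : ℂ →ₐ[ℝ] ℍ[ℝ] :=
  Complex.liftAux I (by rw [← sq]; exact hI)

theorem sliceEmbedding_equivRealProd_symm {I : ℍ[ℝ]} (hI : I ∈ QS) (p : ℝ × ℝ) :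
    sliceEmbedding hI (Complex.equivRealProdCLM.symm p) = (p.1 : ℍ[ℝ]) + p.2 • I := by
  simp [sliceEmbedding, Complex.liftAux_apply, Complex.equivRealProdCLM_symm_apply,
    Quaternion.algebraMap_def]

theorem sliceFun_eq_sliceEmbedding {I : ℍ[ℝ]} (hI : I ∈ QS) (f : ℍ[ℝ] → ℍ[ℝ]) (p : ℝ × ℝ) :
    sliceFun f I p = f (sliceEmbedding hI (Complex.equivRealProdCLM.symm p)) := by
  rw [sliceFun, sliceEmbedding_equivRealProd_symm]

theorem sliceFun_cauchyRiemann {f : ℍ[ℝ] → ℍ[ℝ]} {h : ℂ → ℂ} {I : ℍ[ℝ]} (hI : I ∈ QS)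
    {p : ℝ × ℝ} (hh : DifferentiableAt ℂ h (Complex.equivRealProdCLM.symm p))
    (hfh : ∀ᶠ z in 𝓝 (Complex.equivRealProdCLM.symm p),
      f (sliceEmbedding hI z) = sliceEmbedding hI (h z)) :
    DifferentiableAt ℝ (sliceFun f I) p ∧
      fderiv ℝ (sliceFun f I) p (1, 0) + I * fderiv ℝ (sliceFun f I) p (0, 1) = 0 := by
  set E := Complex.equivRealProdCLM.symm
  set φ := sliceEmbedding hI
  set Φ : ℂ →L[ℝ] ℍ[ℝ] := φ.toLinearMap.toContinuousLinearMap
  have hG : HasFDerivAt (fun p => Φ (h (E p)))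
      (Φ.comp ((deriv h (E p) • (1 : ℂ →L[ℝ] ℂ)).comp (E : ℝ × ℝ →L[ℝ] ℂ))) p :=
    Φ.hasFDerivAt.comp p (hh.hasDerivAt.complexToReal_fderiv.comp p E.hasFDerivAt)
  have heq : sliceFun f I =ᶠ[𝓝 p] fun p => Φ (h (E p)) := by
    filter_upwards [E.continuous.continuousAt.eventually hfh] with p' hp'
    rw [sliceFun_eq_sliceEmbedding hI]
    exact hp'
  have hF := hG.congr_of_eventuallyEq heq
  refine ⟨hF.differentiableAt, ?_⟩
  have hφI : φ Complex.I = I := Complex.liftAux_apply_I _ _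
  have hE₁ : E (1, 0) = 1 := by simp [E, Complex.equivRealProdCLM_symm_apply]
  have hE₂ : E (0, 1) = Complex.I := by simp [E, Complex.equivRealProdCLM_symm_apply]
  rw [hF.fderiv]
  -- the partial derivatives are `φ d` and `φ (d * i) = I * φ d`, with `d` the derivative of `h`
  show φ (deriv h (E p) * E (1, 0)) + I * φ (deriv h (E p) * E (0, 1)) = 0
  rw [hE₁, hE₂, mul_one, mul_comm _ Complex.I, map_mul, hφI, ← mul_assoc, ← sq, hI, neg_one_mul,
    add_neg_cancel]

theorem sliceRegularOn_of_map_complex {f : ℍ[ℝ] → ℍ[ℝ]} {Ω : Set ℍ[ℝ]} {h : ℂ → ℂ} {U : Set ℂ}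
    (hU : IsOpen U) (hh : DifferentiableOn ℂ h U) (hΩU : ∀ φ : ℂ →ₐ[ℝ] ℍ[ℝ], φ ⁻¹' Ω ⊆ U)
    (hfh : ∀ φ : ℂ →ₐ[ℝ] ℍ[ℝ], ∀ z ∈ U, f (φ z) = φ (h z)) : SliceRegularOn f Ω := by
  intro I hI p hp
  rw [← sliceEmbedding_equivRealProd_symm hI] at hp
  have hU_nhds := hU.mem_nhds (hΩU _ hp)
  exact sliceFun_cauchyRiemann hI (hh.differentiableAt hU_nhds)
    (eventually_of_mem hU_nhds (hfh _))

theorem tendstoUniformlyOn_sum_Icc {β F : Type*} [NormedAddCommGroup F] [CompleteSpace F]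
    {f : ℕ → β → F} {u : ℕ → ℝ} {s : Set β} (m : ℕ) (hu : Summable u)
    (hfu : ∀ k, ∀ x ∈ s, ‖f (m + k) x‖ ≤ u k) :
    TendstoUniformlyOn (fun M x => ∑ n ∈ Finset.Icc m M, f n x) (fun x => ∑' k, f (m + k) x)
      atTop s := by
  have h := tendstoUniformlyOn_tsum_nat hu hfu
  have h' : TendstoUniformlyOn (fun M x => ∑ k ∈ Finset.range (M + 1 - m), f (m + k) x)
      (fun x => ∑' k, f (m + k) x) atTop s := fun v hv =>
    ((tendsto_sub_atTop_nat m).comp (tendsto_add_atTop_nat 1)).eventually (h v hv)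
  refine h'.congr (Eventually.of_forall fun M x _ => ?_)
  simp only [← Finset.sum_Ico_eq_sum_range (fun n => f n x), Finset.Ico_add_one_right_eq_Icc]

theorem summable_inv_add_one_sq : Summable fun k : ℕ => (((k : ℝ) + 1) ^ 2)⁻¹ := by
  have h := (summable_nat_add_iff 1).mpr (Real.summable_nat_pow_inv.mpr one_lt_two)
  exact_mod_cast h

section TailSeries

variable {b : ℕ → ℝ} {R : ℝ}

theorem Complex.differentiableOn_tsum_inv_sq_sub_add_one (hb : ∀ k, R + k + 1 ≤ |b k|) :
    DifferentiableOn ℂ (fun z : ℂ => ∑' k, ((z - b k) ^ 2 + 1)⁻¹) (Metric.ball 0 R) := by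
  refine differentiableOn_tsum_of_summable_norm summable_inv_add_one_sq
    (fun k z hz => ?_) Metric.isOpen_ball (fun k z hz => ?_)
  · have hne : (z - b k) ^ 2 + 1 ≠ 0 :=
      sq_sub_add_one_ne_zero ((mem_ball_zero_iff.mp hz).trans (by linarith [hb k]))
    have hd : DifferentiableAt ℂ (fun w : ℂ => (w - b k) ^ 2 + 1) z := by fun_prop
    exact (hd.inv hne).differentiableWithinAt
  · exact norm_inv_sq_sub_add_one_le (mem_ball_zero_iff.mp hz).le (by positivity)
      (by linarith [hb k])

theorem sliceRegularOn_tsum_inv_sq_sub_add_one (hb : ∀ k, R + k + 1 ≤ |b k|) :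
    SliceRegularOn (fun q => ∑' k, ((q - b k) ^ 2 + 1)⁻¹) (Metric.ball 0 R) := by
  refine sliceRegularOn_of_map_complex Metric.isOpen_ball
    (Complex.differentiableOn_tsum_inv_sq_sub_add_one hb) (fun φ z hz => ?_) (fun φ z hz => ?_)
  · rwa [Set.mem_preimage, mem_ball_zero_iff, Quaternion.norm_map_complex,
      ← mem_ball_zero_iff] at hz
  · have hsum : Summable fun k => ((z - b k) ^ 2 + 1)⁻¹ :=
      .of_norm_bounded summable_inv_add_one_sq fun k =>
        Complex.norm_inv_sq_sub_add_one_le (mem_ball_zero_iff.mp hz).le (by positivity)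
          (by linarith [hb k])
    have hφ : Continuous φ := φ.toLinearMap.continuous_of_finiteDimensional
    rw [← (hsum.hasSum.map φ hφ).tsum_eq]
    simp only [Function.comp_def, map_inv₀, Quaternion.map_complex_sq_sub_add_one]

theorem tendstoUniformlyOn_sum_Icc_inv_sq_sub_add_one (m : ℕ)
    (hb : ∀ k, R + k + 1 ≤ |b (m + k)|) :
    TendstoUniformlyOn (fun M (q : ℍ[ℝ]) => ∑ n ∈ Finset.Icc m M, ((q - b n) ^ 2 + 1)⁻¹)
      (fun q => ∑' k, ((q - b (m + k)) ^ 2 + 1)⁻¹) atTop (Metric.ball 0 R) :=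
  tendstoUniformlyOn_sum_Icc m summable_inv_add_one_sq fun k _ hq =>
    Quaternion.norm_inv_sq_sub_add_one_le (mem_ball_zero_iff.mp hq).le (by positivity)
      (by linarith [hb k])

end TailSeries

theorem tail_series_uniform_convergence_general (N : ℕ) :
    (∀ q ∈ Metric.ball (0 : ℍ[ℝ]) (N : ℝ), ∀ n : ℕ, N + 1 ≤ n →
      (q - (n : ℍ[ℝ])) ^ 2 + 1 ≠ 0 ∧ (q + (n : ℍ[ℝ])) ^ 2 + 1 ≠ 0) ∧
    ∃ g₁ g₂ : ℍ[ℝ] → ℍ[ℝ],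
      TendstoUniformlyOn
        (fun M q => ∑ n ∈ Finset.Icc (N + 1) M, ((q - (n : ℍ[ℝ])) ^ 2 + 1)⁻¹)
        g₁ Filter.atTop (Metric.ball (0 : ℍ[ℝ]) (N : ℝ)) ∧
      TendstoUniformlyOn
        (fun M q => ∑ n ∈ Finset.Icc (N + 1) M, ((q + (n : ℍ[ℝ])) ^ 2 + 1)⁻¹)
        g₂ Filter.atTop (Metric.ball (0 : ℍ[ℝ]) (N : ℝ)) ∧
      SliceRegularOn g₁ (Metric.ball (0 : ℍ[ℝ]) (N : ℝ)) ∧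
      SliceRegularOn g₂ (Metric.ball (0 : ℍ[ℝ]) (N : ℝ)) := by
  have hgrowth (k : ℕ) : (N : ℝ) + k + 1 ≤ |((N + 1 + k : ℕ) : ℝ)| :=
    (by push_cast; linarith : (N : ℝ) + k + 1 ≤ _).trans (le_abs_self _)
  have hgrowth' (k : ℕ) : (N : ℝ) + k + 1 ≤ |-((N + 1 + k : ℕ) : ℝ)| := by
    rw [abs_neg]; exact hgrowth k
  have hadd (q : ℍ[ℝ]) (n : ℕ) : q + (n : ℍ[ℝ]) = q - ((-(n : ℝ) : ℝ) : ℍ[ℝ]) := by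
    rw [Quaternion.coe_neg, sub_neg_eq_add, Quaternion.coe_natCast]
  refine ⟨fun q hq n hn => ?_, _, _,
    tendstoUniformlyOn_sum_Icc_inv_sq_sub_add_one (b := fun n => (n : ℝ)) (N + 1) hgrowth,
    (tendstoUniformlyOn_sum_Icc_inv_sq_sub_add_one (b := fun n => -(n : ℝ)) (N + 1)
      hgrowth').congr (Eventually.of_forall fun M q _ => by simp only [hadd]),
    sliceRegularOn_tsum_inv_sq_sub_add_one hgrowth,
    sliceRegularOn_tsum_inv_sq_sub_add_one hgrowth'⟩
  have hqn : ‖q‖ < (n : ℝ) := by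
    have : (N : ℝ) + 1 ≤ n := by exact_mod_cast hn
    linarith [mem_ball_zero_iff.mp hq]
  rw [hadd]
  exact ⟨Quaternion.sq_sub_add_one_ne_zero (c := n) (by rwa [Nat.abs_cast]),
    Quaternion.sq_sub_add_one_ne_zero (by rwa [abs_neg, Nat.abs_cast])⟩

/-- for `N ≥ 1`, the series `Σ_{n ≥ N+1} ((q∓n)²+1)⁻¹` have nonvanishing
denominators on the ball `B(0,N)`, converge uniformly there, and their sums are slice
regular on `B(0,N)`. -/
theorem tail_series_uniform_convergence (N : ℕ) (hN : 1 ≤ N) :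
    (∀ q ∈ Metric.ball (0 : ℍ[ℝ]) (N : ℝ), ∀ n : ℕ, N + 1 ≤ n →
      (q - (n : ℍ[ℝ])) ^ 2 + 1 ≠ 0 ∧ (q + (n : ℍ[ℝ])) ^ 2 + 1 ≠ 0) ∧
    ∃ g₁ g₂ : ℍ[ℝ] → ℍ[ℝ],
      TendstoUniformlyOn
        (fun M q => ∑ n ∈ Finset.Icc (N + 1) M, ((q - (n : ℍ[ℝ])) ^ 2 + 1)⁻¹)
        g₁ Filter.atTop (Metric.ball (0 : ℍ[ℝ]) (N : ℝ)) ∧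
      TendstoUniformlyOn
        (fun M q => ∑ n ∈ Finset.Icc (N + 1) M, ((q + (n : ℍ[ℝ])) ^ 2 + 1)⁻¹)
        g₂ Filter.atTop (Metric.ball (0 : ℍ[ℝ]) (N : ℝ)) ∧
      SliceRegularOn g₁ (Metric.ball (0 : ℍ[ℝ]) (N : ℝ)) ∧
      SliceRegularOn g₂ (Metric.ball (0 : ℍ[ℝ]) (N : ℝ)) :=
  tail_series_uniform_convergence_general N
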